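/- arXiv:quant-ph/0606030 — 4 statements merged into one kernel-verified Lean document; each statement's English description precedes it below -/
import Mathlib

section
/- Let d ≥ 1 and n ≥ 1. Let (ψ_x)_{x ∈ Fin (2^n)} be a family of unit vectors in ℂ^d ⊗ ℂ^d such that every ψ_x admits a Schmidt decomposition with the same Schmidt coefficients λ : Fin d → ℝ (each relative to possibly different orthonormal bases). For each x let {E_{x,1}, …, E_{x,m_x}} be a Kraus set on ℂ^d. Then ∑_{x} ∑_{i=1}^{m_x} |⟨ψ_x, (E_{x,i} ⊗ 1) Φ_ME⟩|² ≤ (2^n / d) · (∑_{a} √(λ_a))². (This is Theorem 1 of the paper: the exact upper bound ∑_x p̃_x ≤ (2^n/d)(∑_a λ_a^{1/2})² on the binding condition of a group covariant quantum string commitment protocol, after reduction of Alice's cheating strategy to attacks on the maximally entangled state.) -/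
/-!
Since `(E ⊗ 1) Φ_ME` is the vectorisation of `E / √d`, a Schmidt vector `∑ₐ √λₐ νₐ ⊗ μₐ` has
overlap `d^{-1/2} ∑ₐ √λₐ ⟨νₐ, E μ̄ₐ⟩` with it. Cauchy–Schwarz with weights `√λₐ` bounds the
squared overlap by `d⁻¹ (∑ₐ √λₐ) ∑ₐ √λₐ |⟨νₐ, E μ̄ₐ⟩|²`, and for a Kraus set
`∑ᵢ |⟨νₐ, Eᵢ μ̄ₐ⟩|² ≤ ∑ᵢ ‖Eᵢ μ̄ₐ‖² = ‖μ̄ₐ‖² = 1`. Each of the `2^n` states thus contributes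
at most `(∑ₐ √λₐ)² / d`.
-/

open Matrix BigOperators
open scoped ComplexConjugate Kronecker

noncomputable section

/-- The standard inner product on `ℂ^I` (functions `I → ℂ`), conjugate-linear in the
first argument. -/
def cinner {I : Type*} [Fintype I] (v w : I → ℂ) : ℂ := ∑ a, conj (v a) * w a

/-- The action of the Kronecker product `A ⊗ B` on `ℂ^d ⊗ ℂ^d`, identified with
the space of functions `Fin d × Fin d → ℂ`. -/
def tensorOp {d : ℕ} (A B : Matrix (Fin d) (Fin d) ℂ) (ψ : Fin d × Fin d → ℂ) :
    Fin d × Fin d → ℂ :=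
  fun p => ∑ q : Fin d × Fin d, A p.1 q.1 * B p.2 q.2 * ψ q

/-- The maximally entangled state `Φ_ME`, with `Φ_ME (a, b) = 1/√d` if `a = b` and `0`
otherwise. -/
def PhiME (d : ℕ) : Fin d × Fin d → ℂ :=
  fun p => if p.1 = p.2 then ((1 / Real.sqrt d : ℝ) : ℂ) else 0

lemma cinner_eq_star_dotProduct {I : Type*} [Fintype I] (v w : I → ℂ) :
    cinner v w = star v ⬝ᵥ w := rfl

lemma cinner_self_eq {I : Type*} [Fintype I] (v : I → ℂ) :
    cinner v v = ((∑ a, ‖v a‖ ^ 2 : ℝ) : ℂ) := by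
  push_cast
  exact Finset.sum_congr rfl fun a _ => Complex.conj_mul' (v a)

lemma sum_norm_sq_eq_one_of_cinner_self {I : Type*} [Fintype I] {v : I → ℂ}
    (h : cinner v v = 1) : ∑ a, ‖v a‖ ^ 2 = 1 := by
  exact_mod_cast (cinner_self_eq v).symm.trans h

lemma norm_cinner_sq_le {I : Type*} [Fintype I] (v w : I → ℂ) :
    ‖cinner v w‖ ^ 2 ≤ (∑ a, ‖v a‖ ^ 2) * ∑ a, ‖w a‖ ^ 2 := by
  have h := norm_inner_le_norm (𝕜 := ℂ) (WithLp.toLp 2 v) (WithLp.toLp 2 w)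
  rw [EuclideanSpace.norm_eq, EuclideanSpace.norm_eq, ← Real.sqrt_mul (by positivity)] at h
  have hinner : inner ℂ (WithLp.toLp 2 v) (WithLp.toLp 2 w) = cinner v w := by
    simp [cinner, PiLp.inner_apply, mul_comm]
  rw [hinner] at h
  simpa using (Real.le_sqrt (norm_nonneg _) (by positivity)).1 h

lemma norm_cinner_sq_le_of_cinner_self {I : Type*} [Fintype I] {v : I → ℂ}
    (hv : cinner v v = 1) (w : I → ℂ) : ‖cinner v w‖ ^ 2 ≤ ∑ a, ‖w a‖ ^ 2 := by
  simpa [sum_norm_sq_eq_one_of_cinner_self hv] using norm_cinner_sq_le v w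

lemma sum_sum_norm_mulVec_sq_of_kraus {I ι : Type*} [Fintype I] [DecidableEq I] [Fintype ι]
    {E : ι → Matrix I I ℂ} (hE : ∑ i, (E i)ᴴ * E i = 1) (v : I → ℂ) :
    ∑ i, ∑ b, ‖(E i *ᵥ v) b‖ ^ 2 = ∑ b, ‖v b‖ ^ 2 := by
  have h : ∑ i, cinner (E i *ᵥ v) (E i *ᵥ v) = cinner v v := by
    simp only [cinner_eq_star_dotProduct, star_mulVec, ← dotProduct_mulVec, mulVec_mulVec,
      ← dotProduct_sum, ← sum_mulVec, hE, one_mulVec]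
  simp only [cinner_self_eq, ← Complex.ofReal_sum] at h
  exact_mod_cast h

lemma norm_sum_mul_sq_le {ι : Type*} (s : Finset ι) {w : ι → ℝ} (hw : ∀ a ∈ s, 0 ≤ w a)
    (z : ι → ℂ) :
    ‖∑ a ∈ s, (w a : ℂ) * z a‖ ^ 2 ≤ (∑ a ∈ s, w a) * ∑ a ∈ s, w a * ‖z a‖ ^ 2 := by
  calc ‖∑ a ∈ s, (w a : ℂ) * z a‖ ^ 2 ≤ (∑ a ∈ s, w a * ‖z a‖) ^ 2 := by
        gcongr
        refine (norm_sum_le _ _).trans_eq (Finset.sum_congr rfl fun a ha => ?_)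
        rw [norm_mul, Complex.norm_real, Real.norm_of_nonneg (hw a ha)]
    _ ≤ _ := Finset.sum_sq_le_sum_mul_sum_of_sq_le_mul _ hw
        (fun a ha => mul_nonneg (hw a ha) (sq_nonneg _)) fun a _ => le_of_eq (by ring)

lemma sum_norm_cinner_mulVec_sq_le_one {I ι : Type*} [Fintype I] [DecidableEq I] [Fintype ι]
    {E : ι → Matrix I I ℂ} (hE : ∑ i, (E i)ᴴ * E i = 1) {v w : I → ℂ}
    (hv : cinner v v = 1) (hw : cinner w w = 1) :
    ∑ i, ‖cinner v (E i *ᵥ w)‖ ^ 2 ≤ 1 := by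
  calc ∑ i, ‖cinner v (E i *ᵥ w)‖ ^ 2 ≤ ∑ i, ∑ b, ‖(E i *ᵥ w) b‖ ^ 2 :=
        Finset.sum_le_sum fun i _ => norm_cinner_sq_le_of_cinner_self hv _
    _ = 1 := by rw [sum_sum_norm_mulVec_sq_of_kraus hE, sum_norm_sq_eq_one_of_cinner_self hw]

lemma cinner_star_self {I : Type*} [Fintype I] (v : I → ℂ) :
    cinner (star v) (star v) = cinner v v := by
  simp only [cinner_self_eq, Pi.star_apply, norm_star]

lemma tensorOp_one_phiME {d : ℕ} (A : Matrix (Fin d) (Fin d) ℂ) (p : Fin d × Fin d) :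
    tensorOp A 1 (PhiME d) p = ((1 / Real.sqrt d : ℝ) : ℂ) * A p.1 p.2 := by
  simp [tensorOp, PhiME, Matrix.one_apply, Fintype.sum_prod_type, mul_comm]

lemma cinner_schmidt_tensorOp_phiME {d : ℕ} (s : Fin d → ℝ) (ν μ : Fin d → Fin d → ℂ)
    (A : Matrix (Fin d) (Fin d) ℂ) :
    cinner (fun p => ∑ a, (s a : ℂ) * ν a p.1 * μ a p.2) (tensorOp A 1 (PhiME d)) =
      ((1 / Real.sqrt d : ℝ) : ℂ) * ∑ a, (s a : ℂ) * cinner (ν a) (A *ᵥ star (μ a)) := by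
  simp only [cinner, tensorOp_one_phiME, mulVec, dotProduct, map_sum, map_mul,
    Complex.conj_ofReal, Pi.star_apply, Complex.star_def, Fintype.sum_prod_type,
    Finset.mul_sum, Finset.sum_mul]
  conv_lhs => enter [2, b]; rw [Finset.sum_comm]
  rw [Finset.sum_comm]
  exact Finset.sum_congr rfl fun a _ => Finset.sum_congr rfl fun b _ =>
    Finset.sum_congr rfl fun c _ => by ring

lemma sum_norm_cinner_schmidt_tensorOp_phiME_sq_le {d : ℕ} {ι : Type*} [Fintype ι]
    {s : Fin d → ℝ} (hs : ∀ a, 0 ≤ s a) {ν μ : Fin d → Fin d → ℂ}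
    (hν : ∀ a, cinner (ν a) (ν a) = 1) (hμ : ∀ a, cinner (μ a) (μ a) = 1)
    {E : ι → Matrix (Fin d) (Fin d) ℂ} (hE : ∑ i, (E i)ᴴ * E i = 1) :
    ∑ i, ‖cinner (fun p => ∑ a, (s a : ℂ) * ν a p.1 * μ a p.2) (tensorOp (E i) 1 (PhiME d))‖ ^ 2
      ≤ (∑ a, s a) ^ 2 / d := by
  have hscale : ‖((1 / Real.sqrt d : ℝ) : ℂ)‖ ^ 2 = 1 / d := by
    rw [Complex.norm_real, Real.norm_eq_abs, sq_abs, div_pow, one_pow,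
      Real.sq_sqrt (Nat.cast_nonneg d)]
  calc _ = ∑ i, 1 / d * ‖∑ a, (s a : ℂ) * cinner (ν a) (E i *ᵥ star (μ a))‖ ^ 2 := by
        simp only [cinner_schmidt_tensorOp_phiME, norm_mul, mul_pow, hscale]
    _ ≤ ∑ i, 1 / d * ((∑ a, s a) * ∑ a, s a * ‖cinner (ν a) (E i *ᵥ star (μ a))‖ ^ 2) := by
        gcongr with i
        exact norm_sum_mul_sq_le _ (fun a _ => hs a) _
    _ = 1 / d * (∑ a, s a) * ∑ a, s a * ∑ i, ‖cinner (ν a) (E i *ᵥ star (μ a))‖ ^ 2 := by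
        rw [← Finset.mul_sum, ← Finset.mul_sum, Finset.sum_comm, mul_assoc]
        simp only [Finset.mul_sum]
    _ ≤ 1 / d * (∑ a, s a) * ∑ a, s a * 1 := by
        have hsum_nonneg : 0 ≤ ∑ a, s a := Finset.sum_nonneg fun a _ => hs a
        gcongr with a
        · exact hs a
        · exact sum_norm_cinner_mulVec_sq_le_one hE (hν a) ((cinner_star_self _).trans (hμ a))
    _ = (∑ a, s a) ^ 2 / d := by simp only [mul_one]; ring

theorem binding_upper_bound_general (d n : ℕ)
    (lam : Fin d → ℝ)
    (ψ : Fin (2 ^ n) → Fin d × Fin d → ℂ)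
    (ν μ : Fin (2 ^ n) → Fin d → Fin d → ℂ)
    (hν : ∀ x a b, cinner (ν x a) (ν x b) = if a = b then 1 else 0)
    (hμ : ∀ x a b, cinner (μ x a) (μ x b) = if a = b then 1 else 0)
    (hψ : ∀ x, ψ x =
      fun p => ∑ a, ((Real.sqrt (lam a) : ℝ) : ℂ) * ν x a p.1 * μ x a p.2)
    (m : Fin (2 ^ n) → ℕ)
    (E : ∀ x, Fin (m x) → Matrix (Fin d) (Fin d) ℂ)
    (hE : ∀ x, ∑ i, (E x i)ᴴ * E x i = 1) :
    ∑ x, ∑ i, ‖cinner (ψ x) (tensorOp (E x i) 1 (PhiME d))‖ ^ 2 ≤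
      ((2 ^ n : ℝ) / d) * (∑ a, Real.sqrt (lam a)) ^ 2 := by
  calc _ ≤ ∑ _x : Fin (2 ^ n), (∑ a, Real.sqrt (lam a)) ^ 2 / d := by
        gcongr with x
        rw [hψ x]
        exact sum_norm_cinner_schmidt_tensorOp_phiME_sq_le (fun a => Real.sqrt_nonneg _)
          (fun a => by simpa using hν x a a) (fun a => by simpa using hμ x a a) (hE x)
    _ = _ := by
        simp only [Finset.sum_const, Finset.card_univ, Fintype.card_fin, nsmul_eq_mul]
        push_cast
        ring

/-- Theorem 1 of the paper: the exact upper bound on the binding condition of a group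
covariant QSC protocol, `∑_x p̃_x ≤ (2^n/d) (∑_a λ_a^{1/2})²`, after reduction of Alice's
cheating strategy to attacks on the maximally entangled state. -/
theorem binding_upper_bound (d n : ℕ) (hd : 1 ≤ d) (hn : 1 ≤ n)
    (lam : Fin d → ℝ) (hlam : ∀ a, 0 ≤ lam a) (hlamsum : ∑ a, lam a = 1)
    (ψ : Fin (2 ^ n) → Fin d × Fin d → ℂ)
    (ν μ : Fin (2 ^ n) → Fin d → Fin d → ℂ)
    (hν : ∀ x a b, cinner (ν x a) (ν x b) = if a = b then 1 else 0)
    (hμ : ∀ x a b, cinner (μ x a) (μ x b) = if a = b then 1 else 0)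
    (hψ : ∀ x, ψ x =
      fun p => ∑ a, ((Real.sqrt (lam a) : ℝ) : ℂ) * ν x a p.1 * μ x a p.2)
    (m : Fin (2 ^ n) → ℕ)
    (E : ∀ x, Fin (m x) → Matrix (Fin d) (Fin d) ℂ)
    (hE : ∀ x, ∑ i, (E x i)ᴴ * E x i = 1) :
    ∑ x, ∑ i, ‖cinner (ψ x) (tensorOp (E x i) 1 (PhiME d))‖ ^ 2 ≤
      ((2 ^ n : ℝ) / d) * (∑ a, Real.sqrt (lam a)) ^ 2 :=
  binding_upper_bound_general d n lam ψ ν μ hν hμ hψ m E hE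
end
end

section
/- Let d ≥ 1 and let ψ ∈ ℂ^d ⊗ ℂ^d be a unit vector with a Schmidt decomposition with Schmidt coefficients λ : Fin d → ℝ. Then there exists a unitary matrix E ∈ M_d(ℂ) such that |⟨ψ, (E ⊗ 1) Φ_ME⟩|² = (1/d) · (∑_{a} √(λ_a))². (This is the equality case of Theorem 1: the bound on the binding condition is attained by Alice's attack using the maximally entangled state and a single Kraus operator with N¹_{ab} = δ_{ab}.) -/
/-!
Take `E = ∑_c ν_c μ_cᵀ`, i.e. `E = Nᵀ M` for the unitaries `N`, `M` whose rows are the Schmidt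
bases. Then `(E ⊗ 1) Φ_ME = d^{-1/2} ∑_c ν_c ⊗ μ_c`, and orthonormality of both bases makes its
overlap with `ψ = ∑_a √λ_a ν_a ⊗ μ_a` equal to `d^{-1/2} ∑_a √λ_a`.
-/

open Matrix BigOperators
open scoped ComplexConjugate Kronecker

noncomputable section

section cinner

variable {I J ι : Type*} [Fintype I] [Fintype J] [Fintype ι]

lemma cinner_sum_left (x : ι → I → ℂ) (w : I → ℂ) :
    cinner (fun i => ∑ a, x a i) w = ∑ a, cinner (x a) w := by
  simp only [cinner, map_sum, Finset.sum_mul]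
  exact Finset.sum_comm

lemma cinner_sum_right (v : I → ℂ) (y : ι → I → ℂ) :
    cinner v (fun i => ∑ c, y c i) = ∑ c, cinner v (y c) := by
  simp only [cinner, Finset.mul_sum]
  exact Finset.sum_comm

lemma cinner_mul_left (c : ℂ) (v w : I → ℂ) :
    cinner (fun i => c * v i) w = conj c * cinner v w := by
  simp only [cinner, map_mul, Finset.mul_sum, mul_assoc]

lemma cinner_mul_right (c : ℂ) (v w : I → ℂ) :
    cinner v (fun i => c * w i) = c * cinner v w := by
  simp only [cinner, Finset.mul_sum, mul_left_comm]

lemma cinner_prod_mul (v v' : I → ℂ) (w w' : J → ℂ) :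
    cinner (fun p : I × J => v p.1 * w p.2) (fun p => v' p.1 * w' p.2) =
      cinner v v' * cinner w w' := by
  simp only [cinner, Fintype.sum_prod_type, Finset.sum_mul_sum, map_mul]
  exact Fintype.sum_congr _ _ fun x => Fintype.sum_congr _ _ fun y => by ring

variable [DecidableEq ι]

lemma cinner_schmidt_sum (s : ι → ℂ) (ν : ι → I → ℂ) (μ : ι → J → ℂ)
    (hν : ∀ a b, cinner (ν a) (ν b) = if a = b then 1 else 0)
    (hμ : ∀ a b, cinner (μ a) (μ b) = if a = b then 1 else 0) :
    cinner (fun p : I × J => ∑ a, s a * ν a p.1 * μ a p.2)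
      (fun p => ∑ c, ν c p.1 * μ c p.2) = ∑ a, conj (s a) := by
  simp_rw [mul_assoc, cinner_sum_left, cinner_mul_left, cinner_sum_right, cinner_prod_mul,
    hν, hμ]
  simp

lemma of_mem_unitaryGroup_of_orthonormal_rows (f : ι → ι → ℂ)
    (hf : ∀ a b, cinner (f a) (f b) = if a = b then 1 else 0) :
    Matrix.of f ∈ unitaryGroup ι ℂ := by
  rw [mem_unitaryGroup_iff]
  ext a b
  simpa [Matrix.mul_apply, cinner, mul_comm, Matrix.one_apply, eq_comm] using hf b a

end cinner

lemma tensorOp_one_PhiME {d : ℕ} (E : Matrix (Fin d) (Fin d) ℂ) (p : Fin d × Fin d) :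
    tensorOp E 1 (PhiME d) p = ((1 / Real.sqrt d : ℝ) : ℂ) * E p.1 p.2 := by
  simp [tensorOp, PhiME, Matrix.one_apply, Fintype.sum_prod_type, mul_comm]

theorem binding_bound_attained_general (d : ℕ)
    (lam : Fin d → ℝ)
    (ψ : Fin d × Fin d → ℂ)
    (ν μ : Fin d → Fin d → ℂ)
    (hν : ∀ a b, cinner (ν a) (ν b) = if a = b then 1 else 0)
    (hμ : ∀ a b, cinner (μ a) (μ b) = if a = b then 1 else 0)
    (hψ : ψ = fun p => ∑ a, ((Real.sqrt (lam a) : ℝ) : ℂ) * ν a p.1 * μ a p.2) :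
    ∃ E : Matrix (Fin d) (Fin d) ℂ, E ∈ Matrix.unitaryGroup (Fin d) ℂ ∧
      ‖cinner ψ (tensorOp E 1 (PhiME d))‖ ^ 2 =
        (1 / d : ℝ) * (∑ a, Real.sqrt (lam a)) ^ 2 := by
  refine ⟨(Matrix.of ν)ᵀ * Matrix.of μ,
    mul_mem (transpose_mem_unitaryGroup_iff.mpr (of_mem_unitaryGroup_of_orthonormal_rows ν hν))
      (of_mem_unitaryGroup_of_orthonormal_rows μ hμ), ?_⟩
  have hE : tensorOp ((Matrix.of ν)ᵀ * Matrix.of μ) 1 (PhiME d) =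
      fun p => ((1 / Real.sqrt d : ℝ) : ℂ) * ∑ c, ν c p.1 * μ c p.2 := by
    funext p
    simp [tensorOp_one_PhiME, Matrix.mul_apply]
  rw [hE, cinner_mul_right, hψ, cinner_schmidt_sum _ ν μ hν hμ]
  simp_rw [Complex.conj_ofReal, ← Complex.ofReal_sum, ← Complex.ofReal_mul, Complex.norm_real,
    Real.norm_eq_abs, sq_abs, mul_pow, div_pow, one_pow, Real.sq_sqrt d.cast_nonneg]

/-- The equality case of Theorem 1: the bound on the binding condition is attained by
Alice's attack using the maximally entangled state and a single unitary Kraus operator. -/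
theorem binding_bound_attained (d : ℕ) (hd : 1 ≤ d)
    (lam : Fin d → ℝ) (hlam : ∀ a, 0 ≤ lam a) (hlamsum : ∑ a, lam a = 1)
    (ψ : Fin d × Fin d → ℂ)
    (ν μ : Fin d → Fin d → ℂ)
    (hν : ∀ a b, cinner (ν a) (ν b) = if a = b then 1 else 0)
    (hμ : ∀ a b, cinner (μ a) (μ b) = if a = b then 1 else 0)
    (hψ : ψ = fun p => ∑ a, ((Real.sqrt (lam a) : ℝ) : ℂ) * ν a p.1 * μ a p.2) :
    ∃ E : Matrix (Fin d) (Fin d) ℂ, E ∈ Matrix.unitaryGroup (Fin d) ℂ ∧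
      ‖cinner ψ (tensorOp E 1 (PhiME d))‖ ^ 2 =
        (1 / d : ℝ) * (∑ a, Real.sqrt (lam a)) ^ 2 :=
  binding_bound_attained_general d lam ψ ν μ hν hμ hψ
end
end

section
/- Let G be a finite group, D : G → M_d(ℂ) an irreducible unitary representation, and ψ ∈ ℂ^d a unit vector such that for every g ∈ G, |⟨ψ, D(g) ψ⟩| ∈ {0, 1}. Then there exist group elements g_1, …, g_d ∈ G such that (D(g_1)ψ, …, D(g_d)ψ) is an orthonormal basis of ℂ^d. (This is the 'classical' alternative of Theorem 2: if every overlap |⟨ψ_0|D(g)|ψ_0⟩|² is 0 or 1, then the commitment states are mutually orthogonal and the protocol is equivalent to a purely classical protocol in which all transactions are done in the computational basis.) -/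
open Matrix BigOperators
open scoped ComplexConjugate Kronecker

noncomputable section

/-!
Unitarity gives `⟨D(g)ψ, D(h)ψ⟩ = ⟨ψ, D(g⁻¹h)ψ⟩`, so any two vectors of the orbit of `ψ` are
either orthogonal or, by the equality case of Cauchy–Schwarz, parallel. Parallelism is then an
equivalence relation on the orbit; one representative per class gives an orthonormal family
spanning the span of the orbit, which is `ℂ^d` by irreducibility.
-/

section UnitOverlaps

open scoped InnerProductSpace

variable {𝕜 E ι : Type*} [RCLike 𝕜] [NormedAddCommGroup E] [InnerProductSpace 𝕜 E]

theorem eq_inner_smul_of_norm_inner_eq_one {x y : E} (hx : ‖x‖ = 1) (hy : ‖y‖ = 1)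
    (h : ‖⟪x, y⟫_𝕜‖ = 1) : y = ⟪x, y⟫_𝕜 • x := by
  have hxy : ‖⟪x, y⟫_𝕜‖ = ‖x‖ * ‖y‖ := by rw [h, hx, hy, one_mul]
  have hx0 : x ≠ 0 := norm_ne_zero_iff.mp (by rw [hx]; exact one_ne_zero)
  have hpar := ((norm_inner_eq_norm_tfae 𝕜 x y).out 0 1).mp hxy
  simpa [hx, hx0] using hpar

variable (v : ι → E) (hv : ∀ i, ‖v i‖ = 1)
  (h01 : ∀ i j, ⟪v i, v j⟫_𝕜 = 0 ∨ ‖⟪v i, v j⟫_𝕜‖ = 1)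
include hv h01

theorem eq_inner_smul_of_inner_ne_zero {i j : ι} (h : ⟪v i, v j⟫_𝕜 ≠ 0) :
    v j = ⟪v i, v j⟫_𝕜 • v i :=
  eq_inner_smul_of_norm_inner_eq_one (hv i) (hv j) ((h01 i j).resolve_left h)

/-- For such a family, non-orthogonal means parallel, hence an equivalence relation. -/
def nonorthogonalSetoid : Setoid ι where
  r i j := ⟪v i, v j⟫_𝕜 ≠ 0
  iseqv :=
    { refl := fun i => by
        rw [inner_self_eq_one_of_norm_eq_one (hv i)]
        exact one_ne_zero
      symm := fun h => by rwa [← inner_conj_symm, map_ne_zero]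
      trans := fun {i j k} hij hjk => by
        rw [eq_inner_smul_of_inner_ne_zero v hv h01 hjk, inner_smul_right]
        exact mul_ne_zero hjk hij }

theorem orthonormal_comp_out :
    Orthonormal 𝕜 fun q : Quotient (nonorthogonalSetoid v hv h01) => v q.out := by
  classical
  rw [orthonormal_iff_ite]
  intro q q'
  split_ifs with hq
  · exact hq ▸ inner_self_eq_one_of_norm_eq_one (hv _)
  · by_contra hne
    exact hq (Quotient.out_equiv_out.mp hne)

theorem span_range_comp_out :
    Submodule.span 𝕜 (Set.range fun q : Quotient (nonorthogonalSetoid v hv h01) => v q.out) =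
      Submodule.span 𝕜 (Set.range v) := by
  refine le_antisymm (Submodule.span_mono (Set.range_comp_subset_range _ _)) ?_
  rw [Submodule.span_le]
  rintro _ ⟨i, rfl⟩
  have hrel : ⟪v (⟦i⟧ : Quotient (nonorthogonalSetoid v hv h01)).out, v i⟫_𝕜 ≠ 0 :=
    Quotient.mk_out (s := nonorthogonalSetoid v hv h01) i
  rw [eq_inner_smul_of_inner_ne_zero v hv h01 hrel]
  exact Submodule.smul_mem _ _ (Submodule.subset_span ⟨_, rfl⟩)

theorem exists_orthonormal_comp_of_inner_eq_zero_or_norm_eq_one [FiniteDimensional 𝕜 E]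
    [Finite ι] (hspan : Submodule.span 𝕜 (Set.range v) = ⊤) :
    ∃ f : Fin (Module.finrank 𝕜 E) → ι, Orthonormal 𝕜 (v ∘ f) := by
  set s := nonorthogonalSetoid v hv h01
  have hon := orthonormal_comp_out v hv h01
  let b : Module.Basis (Quotient s) 𝕜 E :=
    Module.Basis.mk hon.linearIndependent (by rw [span_range_comp_out, hspan])
  let e := Finite.equivFinOfCardEq (Module.finrank_eq_nat_card_basis b).symm
  exact ⟨fun a => (e.symm a).out, hon.comp _ e.symm.injective⟩

end UnitOverlaps

theorem cinner_eq_inner_toLp {I : Type*} [Fintype I] (v w : I → ℂ) :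
    cinner v w = inner ℂ (WithLp.toLp 2 v) (WithLp.toLp 2 w) := by
  simp [cinner, EuclideanSpace.inner_toLp_toLp, dotProduct, mul_comm]

theorem cinner_mulVec_mulVec_of_mem_unitaryGroup {I : Type*} [Fintype I] [DecidableEq I]
    {A : Matrix I I ℂ} (hA : A ∈ Matrix.unitaryGroup I ℂ) (v w : I → ℂ) :
    cinner (A *ᵥ v) (A *ᵥ w) = cinner v w := by
  have hAA : Aᴴ * A = 1 := hA.1
  change star (A *ᵥ v) ⬝ᵥ A *ᵥ w = star v ⬝ᵥ w
  rw [star_mulVec, dotProduct_mulVec, vecMul_vecMul, hAA, vecMul_one]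

theorem span_range_mulVec_eq_top_of_irreducible {G R n : Type*} [Mul G] [CommSemiring R]
    [Fintype n] {D : G → Matrix n n R} (hDhom : ∀ g h, D (g * h) = D g * D h)
    (hirr : ∀ p : Submodule R (n → R), (∀ g, ∀ v ∈ p, D g *ᵥ v ∈ p) → p = ⊥ ∨ p = ⊤)
    {ψ : n → R} {g₀ : G} (hg₀ : D g₀ *ᵥ ψ ≠ 0) :
    Submodule.span R (Set.range fun g => D g *ᵥ ψ) = ⊤ := by
  refine (hirr _ fun g v hv => ?_).resolve_left fun hbot => hg₀ ?_
  · have hmap : (Submodule.span R (Set.range fun g => D g *ᵥ ψ)).map (D g).mulVecLin ≤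
        Submodule.span R (Set.range fun g => D g *ᵥ ψ) := by
      rw [Submodule.map_span, Submodule.span_le]
      rintro _ ⟨_, ⟨h, rfl⟩, rfl⟩
      exact Submodule.subset_span ⟨g * h, by simp [hDhom, mulVec_mulVec]⟩
    exact hmap (Submodule.mem_map_of_mem hv)
  · rw [← Submodule.mem_bot R, ← hbot]
    exact Submodule.subset_span ⟨g₀, rfl⟩

/-- The 'classical' alternative of Theorem 2: if every overlap `|⟨ψ, D(g) ψ⟩|` is `0` or
`1`, then the orbit of `ψ` contains an orthonormal basis `D(g_1)ψ, …, D(g_d)ψ` of `ℂ^d`. -/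
theorem classical_alternative (G : Type*) [Group G] [Fintype G] (d : ℕ)
    (D : G → Matrix (Fin d) (Fin d) ℂ)
    (hDunit : ∀ g, D g ∈ Matrix.unitaryGroup (Fin d) ℂ)
    (hDhom : ∀ g h, D (g * h) = D g * D h)
    (hirr : ∀ p : Submodule ℂ (Fin d → ℂ),
      (∀ g, ∀ v ∈ p, (D g).mulVec v ∈ p) → p = ⊥ ∨ p = ⊤)
    (ψ : Fin d → ℂ) (hψ : cinner ψ ψ = 1)
    (hover : ∀ g : G, ‖cinner ψ ((D g).mulVec ψ)‖ = 0 ∨ ‖cinner ψ ((D g).mulVec ψ)‖ = 1) :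
    ∃ gs : Fin d → G, ∀ a b : Fin d,
      cinner ((D (gs a)).mulVec ψ) ((D (gs b)).mulVec ψ) = if a = b then 1 else 0 := by
  let v : G → EuclideanSpace ℂ (Fin d) := fun g => WithLp.toLp 2 (D g *ᵥ ψ)
  have hinner : ∀ g h, inner ℂ (v g) (v h) = cinner ψ (D (g⁻¹ * h) *ᵥ ψ) := fun g h => by
    rw [← cinner_mulVec_mulVec_of_mem_unitaryGroup (hDunit g), mulVec_mulVec, ← hDhom,
      mul_inv_cancel_left, cinner_eq_inner_toLp]
  have hunit : ∀ g, cinner (D g *ᵥ ψ) (D g *ᵥ ψ) = 1 := fun g => by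
    rw [cinner_mulVec_mulVec_of_mem_unitaryGroup (hDunit g), hψ]
  have hnorm : ∀ g, ‖v g‖ = 1 := fun g => by
    rw [norm_eq_sqrt_re_inner (𝕜 := ℂ), ← cinner_eq_inner_toLp, hunit]
    simp
  have h01 : ∀ g h, inner ℂ (v g) (v h) = 0 ∨ ‖inner ℂ (v g) (v h)‖ = 1 := fun g h => by
    rw [hinner, ← norm_eq_zero]
    exact hover _
  have hspan : Submodule.span ℂ (Set.range v) = ⊤ := by
    have hne : D 1 *ᵥ ψ ≠ 0 := fun h0 => by simpa [h0, cinner] using hunit 1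
    have hrange : Set.range v = (WithLp.linearEquiv 2 ℂ (Fin d → ℂ)).symm.toLinearMap ''
        Set.range fun g => D g *ᵥ ψ := by
      rw [← Set.range_comp]; rfl
    rw [hrange, Submodule.span_image, span_range_mulVec_eq_top_of_irreducible hDhom hirr hne,
      Submodule.map_top, LinearEquiv.range]
  obtain ⟨f, hf⟩ :=
    exists_orthonormal_comp_of_inner_eq_zero_or_norm_eq_one v hnorm h01 hspan
  refine ⟨f ∘ Fin.cast finrank_euclideanSpace_fin.symm, fun a b => ?_⟩
  rw [cinner_eq_inner_toLp]
  exact orthonormal_iff_ite.mp (hf.comp _ (Fin.cast_injective _)) a b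
end
end

section
/- Let G be a finite group and D : G → M_d(ℂ) an irreducible unitary representation with d ≥ 2. Then there exist a unit vector ψ ∈ ℂ^d and an element g ∈ G such that 0 < |⟨ψ, D(g) ψ⟩| < 1. (This is the mathematical content of the Corollary: for every irreducible representation of a finite group there is a choice of commitment state ψ whose orbit {D(g)ψ} does not form an orthonormal basis, so the corresponding quantum string commitment protocol is nontrivial, i.e., satisfies a + b < n.) -/
/-
A unit vector `x` with `‖⟪x, D(g) x⟫‖ = 1` for every `g` is a common eigenvector (equality in
Cauchy–Schwarz), so its span would be a proper invariant line; hence for `d ≥ 2` irreducibility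
yields `x` and `g` with `‖⟪x, D(g) x⟫‖ < 1`. If this overlap happens to vanish, set `u = D(g) x`
and pass to the normalisation of `x + t u` with `‖t‖ = 1/2`: its overlap is `(4/5)(t z + conj t)`
with `z = ⟪x, D(g) u⟫`, of modulus at most `4/5`, and `t` can be chosen so that it is nonzero.
Only the complex scalars make this work: a real rotation by a right angle has zero overlap
with every vector.
-/

open Matrix BigOperators
open scoped ComplexConjugate Kronecker

noncomputable section

open scoped InnerProductSpace

theorem exists_apply_notMem_span_singleton {R M ι : Type*} [Semiring R] [AddCommMonoid M]
    [Module R M] (f : ι → Module.End R M)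
    (hirr : ∀ p : Submodule R M, (∀ i, ∀ v ∈ p, f i v ∈ p) → p = ⊥ ∨ p = ⊤)
    {x : M} (hx : x ≠ 0) (hx_top : R ∙ x ≠ ⊤) : ∃ i, f i x ∉ R ∙ x := by
  by_contra! hfx
  have hinv : ∀ i, ∀ v ∈ R ∙ x, f i v ∈ R ∙ x := by
    intro i v hv
    obtain ⟨a, rfl⟩ := Submodule.mem_span_singleton.mp hv
    rw [map_smul]
    exact Submodule.smul_mem _ a (hfx i)
  rcases hirr _ hinv with hbot | htop
  · exact hx (Submodule.span_singleton_eq_bot.mp hbot)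
  · exact hx_top htop

theorem span_singleton_ne_top_of_one_lt_finrank {K V : Type*} [DivisionRing K] [AddCommGroup V]
    [Module K V] (hV : 1 < Module.finrank K V) (x : V) : K ∙ x ≠ ⊤ := by
  intro htop
  have := finrank_span_le_card (R := K) ({x} : Set V)
  rw [htop, finrank_top] at this
  simp only [Set.toFinset_singleton, Finset.card_singleton] at this
  omega

section InnerProduct

variable {𝕜 E : Type*} [RCLike 𝕜] [NormedAddCommGroup E] [InnerProductSpace 𝕜 E]

theorem norm_inner_lt_one_of_notMem_span_singleton {x y : E} (hx : ‖x‖ = 1) (hy : ‖y‖ = 1)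
    (hxy : y ∉ 𝕜 ∙ x) : ‖⟪x, y⟫_𝕜‖ < 1 := by
  refine lt_of_le_of_ne (by simpa [hx, hy] using norm_inner_le_norm (𝕜 := 𝕜) x y) fun h => hxy ?_
  have hx0 : x ≠ 0 := norm_ne_zero_iff.mp (by simp [hx])
  have hy0 : y ≠ 0 := norm_ne_zero_iff.mp (by simp [hy])
  obtain ⟨r, -, rfl⟩ := (norm_inner_eq_norm_iff hx0 hy0).mp (by rw [h, hx, hy, one_mul])
  exact Submodule.smul_mem _ r (Submodule.mem_span_singleton_self x)

theorem exists_norm_eq_one_of_norm_inner_map_self_mem_Ioo {F : Type*} [FunLike F E E]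
    [LinearMapClass F 𝕜 E E] (U : F) {w : E}
    (hpos : 0 < ‖⟪w, U w⟫_𝕜‖) (hlt : ‖⟪w, U w⟫_𝕜‖ < ‖w‖ ^ 2) :
    ∃ y : E, ‖y‖ = 1 ∧ 0 < ‖⟪y, U y⟫_𝕜‖ ∧ ‖⟪y, U y⟫_𝕜‖ < 1 := by
  have hw : w ≠ 0 := by rintro rfl; simp at hpos
  have hnorm : 0 < ‖w‖ := norm_pos_iff.mpr hw
  refine ⟨((‖w‖⁻¹ : ℝ) : 𝕜) • w, ?_, ?_⟩
  · rw [norm_smul, RCLike.norm_ofReal, abs_inv, abs_norm, inv_mul_cancel₀ hnorm.ne']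
  have hval : ‖⟪((‖w‖⁻¹ : ℝ) : 𝕜) • w, U (((‖w‖⁻¹ : ℝ) : 𝕜) • w)⟫_𝕜‖
      = ‖⟪w, U w⟫_𝕜‖ / ‖w‖ ^ 2 := by
    rw [map_smul, inner_smul_left, inner_smul_right, norm_mul, norm_mul, RCLike.norm_conj,
      RCLike.norm_ofReal, abs_inv, abs_norm]
    field_simp
  rw [hval]
  exact ⟨div_pos hpos (by positivity), (div_lt_one (by positivity)).mpr hlt⟩

end InnerProduct

section Complex

variable {E : Type*} [NormedAddCommGroup E] [InnerProductSpace ℂ E]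

theorem Complex.exists_norm_eq_half_mul_add_conj_ne_zero (z : ℂ) :
    ∃ t : ℂ, ‖t‖ = 1 / 2 ∧ t * z + conj t ≠ 0 := by
  by_cases hz : z = -1
  · refine ⟨Complex.I / 2, by simp, ?_⟩
    rw [hz, map_div₀, Complex.conj_I, map_ofNat]
    ring_nf
    simp
  · refine ⟨1 / 2, by simp, fun h => hz ?_⟩
    simp only [map_div₀, map_one, map_ofNat] at h
    linear_combination 2 * h

theorem exists_norm_inner_map_self_mem_Ioo_of_inner_eq_zero (U : E →ₗᵢ[ℂ] E) {x : E}
    (hx : ‖x‖ = 1) (h0 : ⟪x, U x⟫_ℂ = 0) :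
    ∃ y : E, ‖y‖ = 1 ∧ 0 < ‖⟪y, U y⟫_ℂ‖ ∧ ‖⟪y, U y⟫_ℂ‖ < 1 := by
  obtain ⟨t, ht, hne⟩ := Complex.exists_norm_eq_half_mul_add_conj_ne_zero ⟪x, U (U x)⟫_ℂ
  have hUx : ⟪U x, U x⟫_ℂ = 1 := by
    rw [LinearIsometry.inner_map_map, inner_self_eq_norm_sq_to_K, hx]; simp
  have hUUx : ⟪U x, U (U x)⟫_ℂ = 0 := by rw [LinearIsometry.inner_map_map, h0]
  have hval : ⟪x + t • U x, U (x + t • U x)⟫_ℂ = t * ⟪x, U (U x)⟫_ℂ + conj t := by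
    simp only [map_add, map_smul, inner_add_left, inner_add_right, inner_smul_left,
      inner_smul_right, h0, hUx, hUUx]
    ring
  have hnorm : ‖x + t • U x‖ ^ 2 = 5 / 4 := by
    rw [sq, norm_add_sq_eq_norm_sq_add_norm_sq_of_inner_eq_zero (𝕜 := ℂ) _ _
      (by rw [inner_smul_right, h0, mul_zero]), norm_smul, LinearIsometry.norm_map, hx, ht]
    norm_num
  have hle : ‖t * ⟪x, U (U x)⟫_ℂ + conj t‖ ≤ 1 := by
    have hz : ‖⟪x, U (U x)⟫_ℂ‖ ≤ 1 := by
      simpa [hx] using norm_inner_le_norm (𝕜 := ℂ) x (U (U x))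
    calc ‖t * ⟪x, U (U x)⟫_ℂ + conj t‖ ≤ ‖t‖ * ‖⟪x, U (U x)⟫_ℂ‖ + ‖t‖ := by
          simpa [norm_mul] using norm_add_le (t * ⟪x, U (U x)⟫_ℂ) (conj t)
      _ ≤ 1 / 2 * 1 + 1 / 2 := by rw [ht]; gcongr
      _ = 1 := by norm_num
  refine exists_norm_eq_one_of_norm_inner_map_self_mem_Ioo U (w := x + t • U x) ?_ ?_
  · rw [hval]; exact norm_pos_iff.mpr hne
  · rw [hval, hnorm]; linarith

theorem exists_norm_inner_map_self_mem_Ioo (U : E →ₗᵢ[ℂ] E) {x : E} (hx : ‖x‖ = 1)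
    (hlt : ‖⟪x, U x⟫_ℂ‖ < 1) : ∃ y : E, ‖y‖ = 1 ∧ 0 < ‖⟪y, U y⟫_ℂ‖ ∧ ‖⟪y, U y⟫_ℂ‖ < 1 := by
  by_cases h0 : ⟪x, U x⟫_ℂ = 0
  · exact exists_norm_inner_map_self_mem_Ioo_of_inner_eq_zero U hx h0
  · exact ⟨x, hx, norm_pos_iff.mpr h0, hlt⟩

end Complex

theorem cinner_ofLp_ofLp {I : Type*} [Fintype I] (x y : EuclideanSpace ℂ I) :
    cinner (WithLp.ofLp x) (WithLp.ofLp y) = ⟪x, y⟫_ℂ := by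
  simp [cinner, EuclideanSpace.inner_eq_star_dotProduct, dotProduct, mul_comm]

theorem toLp_mem_span_singleton_iff {𝕜 I : Type*} [RCLike 𝕜] (v w : I → 𝕜) :
    (WithLp.toLp 2 v : EuclideanSpace 𝕜 I) ∈ 𝕜 ∙ WithLp.toLp 2 w ↔ v ∈ 𝕜 ∙ w := by
  simp only [Submodule.mem_span_singleton, ← WithLp.toLp_smul, (WithLp.toLp_injective 2).eq_iff]

theorem nontrivial_protocol_exists_general (G : Type*) (d : ℕ) (hd : 2 ≤ d)
    (D : G → Matrix (Fin d) (Fin d) ℂ)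
    (hDunit : ∀ g, D g ∈ Matrix.unitaryGroup (Fin d) ℂ)
    (hirr : ∀ p : Submodule ℂ (Fin d → ℂ),
      (∀ g, ∀ v ∈ p, (D g).mulVec v ∈ p) → p = ⊥ ∨ p = ⊤) :
    ∃ ψ : Fin d → ℂ, cinner ψ ψ = 1 ∧ ∃ g : G,
      0 < ‖cinner ψ ((D g).mulVec ψ)‖ ∧ ‖cinner ψ ((D g).mulVec ψ)‖ < 1 := by
  let U (g : G) : EuclideanSpace ℂ (Fin d) ≃ₗᵢ[ℂ] EuclideanSpace ℂ (Fin d) :=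
    Unitary.linearIsometryEquiv
      ⟨toEuclideanCLM (n := Fin d) (𝕜 := ℂ) (D g), Unitary.map_mem _ (hDunit g)⟩
  let ψ : Fin d → ℂ := Pi.single ⟨0, by omega⟩ 1
  have hψ : ‖(WithLp.toLp 2 ψ : EuclideanSpace ℂ (Fin d))‖ = 1 := by simp [ψ]
  obtain ⟨g, hg⟩ := exists_apply_notMem_span_singleton (fun g => toLin' (D g))
    (by simpa using hirr) (x := ψ) (by simp [ψ])
    (span_singleton_ne_top_of_one_lt_finrank (by simp; omega) _)
  have hUψ : U g (WithLp.toLp 2 ψ) = WithLp.toLp 2 (D g *ᵥ ψ) := rfl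
  have hlt : ‖⟪WithLp.toLp 2 ψ, U g (WithLp.toLp 2 ψ)⟫_ℂ‖ < 1 :=
    norm_inner_lt_one_of_notMem_span_singleton hψ (by rw [LinearIsometryEquiv.norm_map, hψ])
      (by rwa [hUψ, toLp_mem_span_singleton_iff])
  obtain ⟨y, hy, hpos, hlt⟩ := exists_norm_inner_map_self_mem_Ioo (U g).toLinearIsometry hψ hlt
  have hUy : D g *ᵥ WithLp.ofLp y = WithLp.ofLp (U g y) := rfl
  refine ⟨WithLp.ofLp y, ?_, g, ?_⟩
  · rw [cinner_ofLp_ofLp, inner_self_eq_norm_sq_to_K, hy]; simp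
  · rw [hUy, cinner_ofLp_ofLp]
    exact ⟨hpos, hlt⟩

/-- The Corollary: for every irreducible unitary representation of a finite group with
`d ≥ 2` there is a unit vector `ψ` and a group element `g` with
`0 < |⟨ψ, D(g) ψ⟩| < 1`, so the corresponding QSC protocol is nontrivial. -/
theorem nontrivial_protocol_exists (G : Type*) [Group G] [Fintype G] (d : ℕ) (hd : 2 ≤ d)
    (D : G → Matrix (Fin d) (Fin d) ℂ)
    (hDunit : ∀ g, D g ∈ Matrix.unitaryGroup (Fin d) ℂ)
    (hDhom : ∀ g h, D (g * h) = D g * D h)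
    (hirr : ∀ p : Submodule ℂ (Fin d → ℂ),
      (∀ g, ∀ v ∈ p, (D g).mulVec v ∈ p) → p = ⊥ ∨ p = ⊤) :
    ∃ ψ : Fin d → ℂ, cinner ψ ψ = 1 ∧ ∃ g : G,
      0 < ‖cinner ψ ((D g).mulVec ψ)‖ ∧ ‖cinner ψ ((D g).mulVec ψ)‖ < 1 :=
  nontrivial_protocol_exists_general G d hd D hDunit hirr
end
end
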